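/- arXiv:1307.1120 — 4 statements merged into one kernel-verified Lean document; each statement's English description precedes it below -/
import Mathlib

section
/- Given a group G acting on a finite directed graph E (preserving ranges and sources) and a one-cocycle φ : G × E¹ → G satisfying φ(g,e)·v = g·v for all vertices v, there exists a unique extension of the action to the set E* of finite paths together with an extension of φ to G × E* such that: the extended action preserves path length, commutes with range and source, φ(g, v) = g for vertices v, g·(αβ) = (g·α)(φ(g,α)·β) for composable paths α, β, and φ(g, αβ) = φ(φ(g,α), β). -/
noncomputable section

open scoped Classical

/-! ### Corona groups -/

section CoronaSec

variable (G : Type*) [Group G]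

def eventuallyTrivial : Subgroup (ℕ → G) where
  carrier := {f | ∃ N, ∀ n, N ≤ n → f n = 1}
  one_mem' := ⟨0, fun n _ => rfl⟩
  mul_mem' := by
    rintro a b ⟨N, hN⟩ ⟨M, hM⟩
    exact ⟨max N M, fun n hn => by
      simp [Pi.mul_apply, hN n (le_trans (le_max_left _ _) hn),
        hM n (le_trans (le_max_right _ _) hn)]⟩
  inv_mem' := by
    rintro a ⟨N, hN⟩
    exact ⟨N, fun n hn => by simp [Pi.inv_apply, hN n hn]⟩

instance eventuallyTrivial_normal : (eventuallyTrivial G).Normal := by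
  constructor
  rintro a ⟨N, hN⟩ g
  exact ⟨N, fun n hn => by simp [Pi.mul_apply, Pi.inv_apply, hN n hn]⟩

def lshift : (ℕ → G) →* (ℕ → G) where
  toFun f := fun n => f (n + 1)
  map_one' := rfl
  map_mul' a b := rfl

def rshift : (ℕ → G) →* (ℕ → G) where
  toFun f := fun n => if n = 0 then 1 else f (n - 1)
  map_one' := by funext n; by_cases h : n = 0 <;> simp [h]
  map_mul' a b := by funext n; by_cases h : n = 0 <;> simp [h]

lemma lshift_comap : eventuallyTrivial G ≤ (eventuallyTrivial G).comap (lshift G) := by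
  rintro f ⟨N, hN⟩
  exact ⟨N, fun n hn => hN (n + 1) (by omega)⟩

lemma rshift_comap : eventuallyTrivial G ≤ (eventuallyTrivial G).comap (rshift G) := by
  rintro f ⟨N, hN⟩
  refine ⟨N + 1, fun n hn => ?_⟩
  show (if n = 0 then 1 else f (n - 1)) = 1
  rw [if_neg (by omega)]
  exact hN (n - 1) (by omega)

abbrev Corona : Type _ := (ℕ → G) ⧸ eventuallyTrivial G

def coronaRho : Corona G →* Corona G :=
  QuotientGroup.map _ _ (rshift G) (rshift_comap G)

def coronaLam : Corona G →* Corona G :=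
  QuotientGroup.map _ _ (lshift G) (lshift_comap G)

def coronaRhoZ : ℤ → Corona G → Corona G
  | Int.ofNat n => (⇑(coronaRho G))^[n]
  | Int.negSucc n => (⇑(coronaLam G))^[n + 1]

end CoronaSec

/-! ### Graphs, paths and self-similar actions -/

structure SSGraph (V : Type*) (E : Type*) where
  r : E → V
  d : E → V

namespace SSGraph

variable {V E : Type*}

abbrev Pth (V E : Type*) := V × List E

def IsPath (Γ : SSGraph V E) (p : Pth V E) : Prop :=
  (∀ e ∈ p.2.head?, Γ.r e = p.1) ∧ p.2.Chain' fun a b => Γ.d a = Γ.r b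

def src (Γ : SSGraph V E) (p : Pth V E) : V :=
  match p.2.getLast? with
  | none => p.1
  | some e => Γ.d e

def comp (p q : Pth V E) : Pth V E := (p.1, p.2 ++ q.2)

def ofVertex (v : V) : Pth V E := (v, [])

def ofEdge (Γ : SSGraph V E) (e : E) : Pth V E := (Γ.r e, [e])

structure GraphAction (G : Type*) [Group G] (Γ : SSGraph V E) where
  actV : G → V → V
  actE : G → E → E
  actV_one : ∀ v, actV 1 v = v
  actV_mul : ∀ g h v, actV (g * h) v = actV g (actV h v)
  actE_one : ∀ e, actE 1 e = e
  actE_mul : ∀ g h e, actE (g * h) e = actE g (actE h e)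
  r_act : ∀ g e, Γ.r (actE g e) = actV g (Γ.r e)
  d_act : ∀ g e, Γ.d (actE g e) = actV g (Γ.d e)

structure EdgeCocycle {G : Type*} [Group G] {Γ : SSGraph V E} (GA : GraphAction G Γ) where
  φ : G → E → G
  cocycle : ∀ g h e, φ (g * h) e = φ g (GA.actE h e) * φ h e
  vertex_compat : ∀ g e v, GA.actV (φ g e) v = GA.actV g v

/-- The extension of a self-similar `(G,E,φ)`-datum to the set of all finite paths,
with all the properties listed in the extension proposition. -/
structure PathSystem {G : Type*} [Group G] {Γ : SSGraph V E} {GA : GraphAction G Γ}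
    (c : EdgeCocycle GA) where
  act : G → Pth V E → Pth V E
  coc : G → Pth V E → G
  act_vertex : ∀ g v, act g (ofVertex v) = ofVertex (GA.actV g v)
  act_edge : ∀ g e, act g (Γ.ofEdge e) = Γ.ofEdge (GA.actE g e)
  coc_vertex : ∀ g v, coc g (ofVertex v) = g
  coc_edge : ∀ g e, coc g (Γ.ofEdge e) = c.φ g e
  isPath_act : ∀ g p, Γ.IsPath p → Γ.IsPath (act g p)
  length_act : ∀ g p, Γ.IsPath p → (act g p).2.length = p.2.length
  ran_act : ∀ g p, Γ.IsPath p → (act g p).1 = GA.actV g p.1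
  src_act : ∀ g p, Γ.IsPath p → Γ.src (act g p) = GA.actV g (Γ.src p)
  coc_vertex_act : ∀ g p v, Γ.IsPath p → GA.actV (coc g p) v = GA.actV g v
  act_one : ∀ p, Γ.IsPath p → act 1 p = p
  act_mul : ∀ g h p, Γ.IsPath p → act (g * h) p = act g (act h p)
  coc_mul : ∀ g h p, Γ.IsPath p → coc (g * h) p = coc g (act h p) * coc h p
  act_comp : ∀ g p q, Γ.IsPath p → Γ.IsPath q → Γ.src p = q.1 →
    act g (comp p q) = comp (act g p) (act (coc g p) q)
  coc_comp : ∀ g p q, Γ.IsPath p → Γ.IsPath q → Γ.src p = q.1 →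
    coc g (comp p q) = coc (coc g p) q

def PseudoFree {G : Type*} [Group G] {Γ : SSGraph V E} (GA : GraphAction G Γ)
    (c : EdgeCocycle GA) : Prop :=
  ∀ g e, GA.actE g e = e → c.φ g e = 1 → g = 1

/-! ### The inverse semigroup `S_{G,E}` -/

def SgeCond {G : Type*} [Group G] (Γ : SSGraph V E) (GA : GraphAction G Γ)
    (t : Pth V E × G × Pth V E) : Prop :=
  Γ.IsPath t.1 ∧ Γ.IsPath t.2.2 ∧ Γ.src t.1 = GA.actV t.2.1 (Γ.src t.2.2)

def sgeSet {G : Type*} [Group G] (Γ : SSGraph V E) (GA : GraphAction G Γ) :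
    Set (Option (Pth V E × G × Pth V E)) :=
  {x | x = none ∨ ∃ t, x = some t ∧ SgeCond Γ GA t}

def sgeMulAux {G : Type*} [Group G] {Γ : SSGraph V E} {GA : GraphAction G Γ}
    {c : EdgeCocycle GA} (S : PathSystem c) :
    Pth V E × G × Pth V E → Pth V E × G × Pth V E → Option (Pth V E × G × Pth V E) :=
  fun x y =>
    if x.2.2.1 = y.1.1 ∧ x.2.2.2 <+: y.1.2 then
      let ε : Pth V E := (Γ.src x.2.2, y.1.2.drop x.2.2.2.length)
      some (comp x.1 (S.act x.2.1 ε), S.coc x.2.1 ε * y.2.1, y.2.2)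
    else if y.1.1 = x.2.2.1 ∧ y.1.2 <+: x.2.2.2 then
      let ε : Pth V E := (Γ.src y.1, x.2.2.2.drop y.1.2.length)
      some (x.1, x.2.1 * (S.coc y.2.1⁻¹ ε)⁻¹, comp y.2.2 (S.act y.2.1⁻¹ ε))
    else none

def sgeMul {G : Type*} [Group G] {Γ : SSGraph V E} {GA : GraphAction G Γ}
    {c : EdgeCocycle GA} (S : PathSystem c) :
    Option (Pth V E × G × Pth V E) → Option (Pth V E × G × Pth V E) →
      Option (Pth V E × G × Pth V E)
  | some x, some y => sgeMulAux S x y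
  | _, _ => none

def sgeStar {G : Type*} [Group G] :
    Option (Pth V E × G × Pth V E) → Option (Pth V E × G × Pth V E)
  | none => none
  | some t => some (t.2.2, t.2.1⁻¹, t.1)

/-! ### Infinite paths -/

def InfPath (Γ : SSGraph V E) (ξ : ℕ → E) : Prop :=
  ∀ n, Γ.d (ξ n) = Γ.r (ξ (n + 1))

/-- Truncation of an infinite path: the finite path formed by its first `n` edges.
(Index `n` of the sequence is the `(n+1)`-st edge of the path.) -/
def trunc (Γ : SSGraph V E) (ξ : ℕ → E) (n : ℕ) : Pth V E :=
  (Γ.r (ξ 0), (List.range n).map ξ)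

/-- Concatenation `αξ` of a finite path with an infinite path. -/
def compInf (α : Pth V E) (ξ : ℕ → E) : ℕ → E :=
  fun n => α.2.getD n (ξ (n - α.2.length))

/-- `Phi S g ξ n = φ(g, ξ|_n)`, i.e. the entry of the sequence `Φ(g,ξ) ∈ G^∞` at the
`(n+1)`-st position in the 1-based indexing of the paper. -/
def Phi {G : Type*} [Group G] {Γ : SSGraph V E} {GA : GraphAction G Γ}
    {c : EdgeCocycle GA} (S : PathSystem c) (g : G) (ξ : ℕ → E) : ℕ → G :=
  fun n => S.coc g (Γ.trunc ξ n)

/-- The extension of the self-similar action to infinite paths. -/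
structure InfAction {G : Type*} [Group G] {Γ : SSGraph V E} {GA : GraphAction G Γ}
    {c : EdgeCocycle GA} (S : PathSystem c) where
  a : G → (ℕ → E) → (ℕ → E)
  isInf : ∀ g ξ, Γ.InfPath ξ → Γ.InfPath (a g ξ)
  a_one : ∀ ξ, Γ.InfPath ξ → a 1 ξ = ξ
  a_mul : ∀ g h ξ, Γ.InfPath ξ → a (g * h) ξ = a g (a h ξ)
  trunc_a : ∀ g ξ n, Γ.InfPath ξ → Γ.trunc (a g ξ) n = S.act g (Γ.trunc ξ n)

/-- `η` belongs to the cylinder `Z(β)`. -/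
def InCyl (Γ : SSGraph V E) (β : Pth V E) (η : ℕ → E) : Prop :=
  Γ.r (η 0) = β.1 ∧ ∀ n (hn : n < β.2.length), η n = β.2[n]'hn

/-- Equality of germs `[α₁,g₁,β₁; η₁] = [α₂,g₂,β₂; η₂]` for the action of `S_{G,E}`
on the infinite path space. -/
def germEqv {G : Type*} [Group G] {Γ : SSGraph V E} {GA : GraphAction G Γ}
    {c : EdgeCocycle GA} (S : PathSystem c)
    (α₁ : Pth V E) (g₁ : G) (β₁ : Pth V E) (η₁ : ℕ → E)
    (α₂ : Pth V E) (g₂ : G) (β₂ : Pth V E) (η₂ : ℕ → E) : Prop :=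
  η₁ = η₂ ∧ ∃ δ : Pth V E, Γ.IsPath δ ∧ Γ.InCyl δ η₁ ∧
    sgeMul S (some (α₁, g₁, β₁)) (some (δ, 1, δ)) =
      sgeMul S (some (α₂, g₂, β₂)) (some (δ, 1, δ))

/-- The partial isometry `s_α` associated to a finite path. -/
def sPath {A : Type*} [Monoid A] (pv : V → A) (se : E → A) : Pth V E → A :=
  fun x =>
    match x with
    | (v, []) => pv v
    | (_, es) => (es.map se).prod

end SSGraph

end

/-! The recursion `g · (e α) = (g · e) (φ(g,e) · α)`, `φ(g, e α) = φ(φ(g,e), α)` along the first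
edge of a path is forced by the requirements on edges and on concatenations, so any two
extensions agree; conversely it defines an extension, whose action and cocycle laws are
inherited edge by edge from those of `φ`, and which respects vertices because `φ(g,e)`
moves vertices as `g` does. -/

namespace SSGraph

variable {V E G : Type*} [Group G] {Γ : SSGraph V E} {GA : GraphAction G Γ}

lemma isPath_nil (v : V) : Γ.IsPath (v, []) :=
  ⟨by simp, List.isChain_nil⟩

lemma isPath_cons_iff {v : V} {e : E} {es : List E} :
    Γ.IsPath (v, e :: es) ↔ Γ.r e = v ∧ Γ.IsPath (Γ.d e, es) := by
  constructor
  · rintro ⟨hr, hc⟩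
    obtain ⟨hd, hes⟩ := List.isChain_cons.1 hc
    exact ⟨hr e rfl, fun b hb => (hd b hb).symm, hes⟩
  · rintro ⟨rfl, hd, hes⟩
    exact ⟨fun _ h => by cases h; rfl, List.isChain_cons.2 ⟨fun b hb => (hd b hb).symm, hes⟩⟩

lemma isPath_ofEdge (e : E) : Γ.IsPath (Γ.ofEdge e) :=
  isPath_cons_iff.2 ⟨rfl, isPath_nil _⟩

lemma src_cons (v : V) (e : E) (es : List E) : Γ.src (v, e :: es) = Γ.src (Γ.d e, es) := by
  cases es <;> simp [src, List.getLast?_cons]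

lemma comp_ofEdge (e : E) (es : List E) :
    comp (Γ.ofEdge e) (Γ.d e, es) = (Γ.r e, e :: es) :=
  rfl

namespace EdgeCocycle

variable (c : EdgeCocycle GA)

@[simp]
lemma φ_one (e : E) : c.φ 1 e = 1 := by
  simpa [GA.actE_one] using c.cocycle 1 1 e

def actList : G → List E → List E
  | _, [] => []
  | g, e :: es => GA.actE g e :: actList (c.φ g e) es

def cocList : G → List E → G
  | g, [] => g
  | g, e :: es => cocList (c.φ g e) es

@[simp]
lemma length_actList (g : G) (es : List E) : (c.actList g es).length = es.length := by
  induction es generalizing g <;> simp [actList, *]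

lemma isPath_actList {g : G} {v : V} {es : List E} (h : Γ.IsPath (v, es)) :
    Γ.IsPath (GA.actV g v, c.actList g es) := by
  induction es generalizing g v with
  | nil => exact isPath_nil _
  | cons e es ih =>
    obtain ⟨rfl, hes⟩ := isPath_cons_iff.1 h
    refine isPath_cons_iff.2 ⟨GA.r_act g e, ?_⟩
    rw [GA.d_act, ← c.vertex_compat g e]
    exact ih hes

lemma src_actList (g : G) (v : V) (es : List E) :
    Γ.src (GA.actV g v, c.actList g es) = GA.actV g (Γ.src (v, es)) := by
  induction es generalizing g v with
  | nil => rfl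
  | cons e es ih =>
    rw [actList, src_cons, src_cons, GA.d_act, ← c.vertex_compat g e, ih, c.vertex_compat]

lemma actV_cocList (g : G) (es : List E) (v : V) : GA.actV (c.cocList g es) v = GA.actV g v := by
  induction es generalizing g with
  | nil => rfl
  | cons e es ih => rw [cocList, ih, c.vertex_compat]

lemma actList_one (es : List E) : c.actList 1 es = es := by
  induction es <;> simp [actList, GA.actE_one, *]

lemma actList_mul (g h : G) (es : List E) :
    c.actList (g * h) es = c.actList g (c.actList h es) := by
  induction es generalizing g h <;> simp [actList, GA.actE_mul, c.cocycle, *]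

lemma cocList_mul (g h : G) (es : List E) :
    c.cocList (g * h) es = c.cocList g (c.actList h es) * c.cocList h es := by
  induction es generalizing g h <;> simp [actList, cocList, c.cocycle, *]

lemma actList_append (g : G) (es fs : List E) :
    c.actList g (es ++ fs) = c.actList g es ++ c.actList (c.cocList g es) fs := by
  induction es generalizing g <;> simp [actList, cocList, *]

lemma cocList_append (g : G) (es fs : List E) :
    c.cocList g (es ++ fs) = c.cocList (c.cocList g es) fs := by
  induction es generalizing g <;> simp [cocList, *]

def pathSystem : PathSystem c where
  act g p := (GA.actV g p.1, c.actList g p.2)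
  coc g p := c.cocList g p.2
  act_vertex _ _ := rfl
  act_edge g e := by simp [ofEdge, actList, GA.r_act]
  coc_vertex _ _ := rfl
  coc_edge _ _ := rfl
  isPath_act _ _ h := c.isPath_actList h
  length_act g p _ := c.length_actList g p.2
  ran_act _ _ _ := rfl
  src_act g p _ := c.src_actList g p.1 p.2
  coc_vertex_act g p v _ := c.actV_cocList g p.2 v
  act_one p _ := by simp [actList_one, GA.actV_one]
  act_mul g h p _ := by simp [actList_mul, GA.actV_mul]
  coc_mul g h p _ := c.cocList_mul g h p.2
  act_comp g p q _ _ _ := by simp [comp, actList_append]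
  coc_comp g p q _ _ _ := c.cocList_append g p.2 q.2

end EdgeCocycle

namespace PathSystem

variable {c : EdgeCocycle GA}

theorem act_coc_eq_pathSystem (S : PathSystem c) (g : G) {p : Pth V E} (hp : Γ.IsPath p) :
    S.act g p = c.pathSystem.act g p ∧ S.coc g p = c.pathSystem.coc g p := by
  obtain ⟨v, es⟩ := p
  induction es generalizing g v with
  | nil => exact ⟨S.act_vertex g v, S.coc_vertex g v⟩
  | cons e es ih =>
    obtain ⟨rfl, hes⟩ := isPath_cons_iff.1 hp
    obtain ⟨ih_act, ih_coc⟩ := ih (c.φ g e) _ hes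
    rw [← comp_ofEdge, S.act_comp g _ _ (isPath_ofEdge e) hes rfl,
      S.coc_comp g _ _ (isPath_ofEdge e) hes rfl, S.act_edge, S.coc_edge, ih_act, ih_coc]
    exact ⟨by simp [EdgeCocycle.pathSystem, comp, ofEdge, EdgeCocycle.actList, GA.r_act], rfl⟩

end PathSystem

end SSGraph

open SSGraph in
theorem pathSystem_exists_unique_general {V E G : Type*} [Group G]
    (Γ : SSGraph V E)
    (GA : SSGraph.GraphAction G Γ) (c : SSGraph.EdgeCocycle GA) :
    ∃ S : PathSystem c, ∀ S' : PathSystem c,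
      ∀ (g : G) (p : Pth V E), Γ.IsPath p →
        S'.act g p = S.act g p ∧ S'.coc g p = S.coc g p :=
  ⟨c.pathSystem, fun S' g _ hp => S'.act_coc_eq_pathSystem g hp⟩

open SSGraph in
theorem pathSystem_exists_unique {V E G : Type*} [Group G] [Countable G] [Fintype V] [Fintype E]
    (Γ : SSGraph V E) (hns : ∀ v : V, ∃ e, Γ.r e = v)
    (GA : SSGraph.GraphAction G Γ) (c : SSGraph.EdgeCocycle GA) :
    ∃ S : PathSystem c, ∀ S' : PathSystem c,
      ∀ (g : G) (p : Pth V E), Γ.IsPath p →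
        S'.act g p = S.act g p ∧ S'.coc g p = S.coc g p :=
  pathSystem_exists_unique_general Γ GA c
end

section
/- The set S_{G,E} = {(α,g,β) ∈ E* × G × E* : d(α) = g·d(β)} ∪ {0}, with multiplication (α,g,β)(γ,h,δ) = (α(g·ε), φ(g,ε)h, δ) if γ = βε, = (α, gφ(h⁻¹,ε)⁻¹, δ(h⁻¹·ε)) if β = γε, and 0 otherwise, and involution (α,g,β)* = (β,g⁻¹,α), is an inverse semigroup with zero. -/
/-! Products `(α, g, β)(γ, h, δ)` are computed from the normal forms `γ = βε` (first branch of
`sgeMulAux`) and `β = γε` (second branch, whose formula is also right for empty `ε`); the product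
is `0` exactly when `β` and `γ` are incomparable. The involution reverses products,
`(xy)* = y*x*`, and swaps the two normal forms, so closure, associativity and uniqueness of
inverses only need to be checked in half of the configurations. There associativity comes down to
the self-similarity identities `g·(pq) = (g·p)(φ(g,p)·q)` and `φ(g,pq) = φ(φ(g,p),q)`, and
`xyx = x` with `γ = βε` forces `ε` to be trivial by comparing lengths, after which `y = x*`. -/

namespace SSGraph

variable {V E : Type*}

def IsPrefix (p q : Pth V E) : Prop := p.1 = q.1 ∧ p.2 <+: q.2

section Paths

variable {Γ : SSGraph V E} {p q r : Pth V E}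

theorem comp_assoc (p q r : Pth V E) : comp (comp p q) r = comp p (comp q r) := by
  simp [comp]

@[simp]
theorem comp_ofVertex (p : Pth V E) (v : V) : comp p (ofVertex v) = p := by
  simp [comp, ofVertex]

theorem eq_ofVertex_of_snd_eq_nil (h : p.2 = []) : p = ofVertex p.1 := Prod.ext rfl h

theorem src_comp (h : Γ.src p = q.1) : Γ.src (comp p q) = Γ.src q := by
  obtain ⟨v, l⟩ := q
  rcases List.eq_nil_or_concat l with rfl | ⟨L, b, rfl⟩
  · simpa [comp, src] using h
  · simp [comp, src]

theorem isPath_iff : Γ.IsPath p ↔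
    (∀ e ∈ p.2.head?, Γ.r e = p.1) ∧ p.2.IsChain fun a b => Γ.d a = Γ.r b :=
  Iff.rfl

theorem isPath_comp_iff (h : q.1 = Γ.src p) :
    Γ.IsPath (comp p q) ↔ Γ.IsPath p ∧ Γ.IsPath q := by
  obtain ⟨v, l⟩ := p
  obtain ⟨w, m⟩ := q
  rcases List.eq_nil_or_concat l with rfl | ⟨L, b, rfl⟩
  · simp_all [isPath_iff, comp, src]
  · simp_all [isPath_iff, comp, src, List.isChain_append, List.isChain_cons, eq_comm]
    tauto

theorem IsPrefix.refl (p : Pth V E) : IsPrefix p p := ⟨rfl, List.prefix_rfl⟩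

theorem IsPrefix.trans (hpq : IsPrefix p q) (hqr : IsPrefix q r) : IsPrefix p r :=
  ⟨hpq.1.trans hqr.1, hpq.2.trans hqr.2⟩

theorem IsPrefix.total (hp : IsPrefix p r) (hq : IsPrefix q r) : IsPrefix p q ∨ IsPrefix q p :=
  (List.prefix_or_prefix_of_prefix hp.2 hq.2).imp (⟨hp.1.trans hq.1.symm, ·⟩)
    (⟨hq.1.trans hp.1.symm, ·⟩)

theorem IsPrefix.of_eq (h : p = q) : IsPrefix p q := h ▸ IsPrefix.refl p

theorem isPrefix_comp (p q : Pth V E) : IsPrefix p (comp p q) := ⟨rfl, List.prefix_append _ _⟩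

theorem comp_isPrefix_comp_iff (h : q.1 = r.1) :
    IsPrefix (comp p q) (comp p r) ↔ IsPrefix q r := by
  simp [IsPrefix, comp, h, List.prefix_append_right_inj]

theorem snd_eq_nil_of_comp_isPrefix (h : IsPrefix (comp p q) p) : q.2 = [] := by
  simpa [comp] using h.2.eq_of_length (le_antisymm h.2.length_le (by simp [comp]))

theorem IsPrefix.exists_eq_comp (Γ : SSGraph V E) (h : IsPrefix p q) :
    ∃ ε : Pth V E, ε.1 = Γ.src p ∧ q = comp p ε := by
  obtain ⟨h1, l, hl⟩ := h
  exact ⟨(Γ.src p, l), rfl, Prod.ext h1.symm hl.symm⟩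

end Paths

variable {G : Type*} [Group G] {Γ : SSGraph V E}

theorem GraphAction.actV_inv_actV (GA : GraphAction G Γ) (g : G) (v : V) :
    GA.actV g⁻¹ (GA.actV g v) = v := by
  rw [← GA.actV_mul, inv_mul_cancel, GA.actV_one]

namespace PathSystem

variable {GA : GraphAction G Γ} {c : EdgeCocycle GA} (S : PathSystem c) {p q : Pth V E}

theorem coc_one (hp : Γ.IsPath p) : S.coc 1 p = 1 := by
  simpa [S.act_one p hp] using S.coc_mul 1 1 p hp

theorem act_inv_act (g : G) (hp : Γ.IsPath p) : S.act g⁻¹ (S.act g p) = p := by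
  rw [← S.act_mul g⁻¹ g p hp, inv_mul_cancel, S.act_one p hp]

theorem act_act_inv (g : G) (hp : Γ.IsPath p) : S.act g (S.act g⁻¹ p) = p := by
  simpa using S.act_inv_act g⁻¹ hp

theorem coc_inv_act (g : G) (hp : Γ.IsPath p) : S.coc g⁻¹ (S.act g p) = (S.coc g p)⁻¹ := by
  have h := S.coc_mul g⁻¹ g p hp
  rw [inv_mul_cancel, S.coc_one hp] at h
  exact eq_inv_of_mul_eq_one_left h.symm

theorem isPrefix_act (hq : Γ.IsPath q) (h : IsPrefix p q) (g : G) :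
    IsPrefix (S.act g p) (S.act g q) := by
  obtain ⟨ε, hε, rfl⟩ := h.exists_eq_comp Γ
  have hpε := (isPath_comp_iff hε).1 hq
  rw [S.act_comp g p ε hpε.1 hpε.2 hε.symm]
  exact isPrefix_comp _ _

theorem act_isPrefix_act_iff (hp : Γ.IsPath p) (hq : Γ.IsPath q) (g : G) :
    IsPrefix (S.act g p) (S.act g q) ↔ IsPrefix p q := by
  refine ⟨fun h => ?_, fun h => S.isPrefix_act hq h g⟩
  simpa [S.act_inv_act g hp, S.act_inv_act g hq] using
    S.isPrefix_act (S.isPath_act g q hq) h g⁻¹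

theorem eq_ofVertex_of_comp_act_isPrefix {w : Pth V E} (hw : Γ.IsPath w) {g : G}
    (h : IsPrefix (comp p (S.act g w)) p) : w = ofVertex w.1 :=
  eq_ofVertex_of_snd_eq_nil <| List.length_eq_zero_iff.mp <| by
    rw [← S.length_act g w hw, snd_eq_nil_of_comp_isPrefix h, List.length_nil]

end PathSystem

section Semigroup

variable {GA : GraphAction G Γ} {c : EdgeCocycle GA} (S : PathSystem c)
  {α β γ δ ε : Pth V E} {g h : G}

theorem sgeMul_some (x y : Pth V E × G × Pth V E) :
    sgeMul S (some x) (some y) = sgeMulAux S x y := rfl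

@[simp]
theorem sgeMul_none_left (x : Option (Pth V E × G × Pth V E)) : sgeMul S none x = none := by
  cases x <;> rfl

@[simp]
theorem sgeMul_none_right (x : Option (Pth V E × G × Pth V E)) : sgeMul S x none = none := by
  cases x <;> rfl

theorem sgeMulAux_comp_right (hε : ε.1 = Γ.src β) :
    sgeMulAux S (α, g, β) (comp β ε, h, δ) =
      some (comp α (S.act g ε), S.coc g ε * h, δ) := by
  have hdrop : ((Γ.src β, (comp β ε).2.drop β.2.length) : Pth V E) = ε :=
    Prod.ext hε.symm List.drop_left
  have hpre : β.1 = (comp β ε).1 ∧ β.2 <+: (comp β ε).2 := isPrefix_comp β ε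
  simp only [sgeMulAux, if_pos hpre, hdrop]

theorem sgeMulAux_self : sgeMulAux S (α, g, β) (β, h, δ) = some (α, g * h, δ) := by
  simpa [S.act_vertex, S.coc_vertex] using
    sgeMulAux_comp_right S (α := α) (g := g) (h := h) (δ := δ) (ε := ofVertex (Γ.src β)) rfl

theorem sgeMulAux_comp_left (hε : ε.1 = Γ.src γ) :
    sgeMulAux S (α, g, comp γ ε) (γ, h, δ) =
      some (α, g * (S.coc h⁻¹ ε)⁻¹, comp δ (S.act h⁻¹ ε)) := by
  -- for empty `ε` the first branch of `sgeMulAux` applies, with the same value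
  by_cases hγ : (comp γ ε).1 = γ.1 ∧ (comp γ ε).2 <+: γ.2
  · rw [eq_ofVertex_of_snd_eq_nil (snd_eq_nil_of_comp_isPrefix hγ), hε]
    simp [S.act_vertex, S.coc_vertex, sgeMulAux_self]
  have hdrop : ((Γ.src γ, (comp γ ε).2.drop γ.2.length) : Pth V E) = ε :=
    Prod.ext hε.symm List.drop_left
  have hpre : γ.1 = (comp γ ε).1 ∧ γ.2 <+: (comp γ ε).2 := isPrefix_comp γ ε
  simp only [sgeMulAux, if_neg hγ, if_pos hpre, hdrop]

theorem sgeMulAux_eq_none_iff {x y : Pth V E × G × Pth V E} :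
    sgeMulAux S x y = none ↔ ¬IsPrefix x.2.2 y.1 ∧ ¬IsPrefix y.1 x.2.2 := by
  unfold sgeMulAux IsPrefix
  split_ifs <;> simp_all

theorem isPrefix_fst_of_sgeMulAux_eq_some {x y w : Pth V E × G × Pth V E}
    (h : sgeMulAux S x y = some w) : IsPrefix x.1 w.1 := by
  unfold sgeMulAux at h
  split_ifs at h <;> cases h
  · exact isPrefix_comp _ _
  · exact IsPrefix.refl _

theorem sgeMulAux_eq_none_of_isPrefix {x y w : Pth V E × G × Pth V E}
    (h : sgeMulAux S x y = none) (hγ : IsPrefix y.1 w.1) : sgeMulAux S x w = none := by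
  obtain ⟨h1, h2⟩ := (sgeMulAux_eq_none_iff S).1 h
  refine (sgeMulAux_eq_none_iff S).2 ⟨fun hβ => ?_, fun hβ => h2 (hγ.trans hβ)⟩
  exact (hβ.total hγ).elim h1 h2

@[simp]
theorem sgeStar_some (t : Pth V E × G × Pth V E) : sgeStar (some t) = some (t.2.2, t.2.1⁻¹, t.1) :=
  rfl

@[simp]
theorem sgeStar_sgeStar (x : Option (Pth V E × G × Pth V E)) : sgeStar (sgeStar x) = x := by
  rcases x with _ | ⟨α, g, β⟩ <;> simp [sgeStar]

theorem sgeStar_sgeMul (x y : Option (Pth V E × G × Pth V E)) :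
    sgeStar (sgeMul S x y) = sgeMul S (sgeStar y) (sgeStar x) := by
  rcases x with _ | ⟨α, g, β⟩
  · simp [sgeStar]
  rcases y with _ | ⟨γ, h, δ⟩
  · simp [sgeStar]
  simp only [sgeStar_some, sgeMul_some]
  by_cases hβγ : IsPrefix β γ
  · obtain ⟨ε, hε, rfl⟩ := hβγ.exists_eq_comp Γ
    simp [sgeMulAux_comp_right S hε, sgeMulAux_comp_left S hε]
  by_cases hγβ : IsPrefix γ β
  · obtain ⟨ε, hε, rfl⟩ := hγβ.exists_eq_comp Γ
    simp [sgeMulAux_comp_right S hε, sgeMulAux_comp_left S hε]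
  rw [(sgeMulAux_eq_none_iff S).2 ⟨hβγ, hγβ⟩, (sgeMulAux_eq_none_iff S).2 ⟨hγβ, hβγ⟩]
  rfl

theorem sgeMul_sgeMul_sgeStar_self (x : Option (Pth V E × G × Pth V E)) :
    sgeMul S (sgeMul S x (sgeStar x)) x = x := by
  rcases x with _ | ⟨α, g, β⟩
  · rfl
  simp [sgeMul_some, sgeMulAux_self]

theorem sgeCond_star (hx : SgeCond Γ GA (α, g, β)) : SgeCond Γ GA (β, g⁻¹, α) := by
  obtain ⟨hα, hβ, hαβ⟩ := hx
  exact ⟨hβ, hα, by rw [hαβ, GA.actV_inv_actV]⟩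

theorem sgeStar_mem_sgeSet {x : Option (Pth V E × G × Pth V E)} (hx : x ∈ sgeSet Γ GA) :
    sgeStar x ∈ sgeSet Γ GA := by
  rcases hx with rfl | ⟨⟨α, g, β⟩, rfl, hx⟩
  · exact Or.inl rfl
  · exact Or.inr ⟨_, rfl, sgeCond_star hx⟩

theorem sgeCond_comp_right (hx : SgeCond Γ GA (α, g, β)) (hy : SgeCond Γ GA (comp β ε, h, δ))
    (hε : ε.1 = Γ.src β) : SgeCond Γ GA (comp α (S.act g ε), S.coc g ε * h, δ) := by
  obtain ⟨hα, -, hαβ⟩ := hx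
  obtain ⟨hβε, hδ, hβεδ⟩ := hy
  have hεp := ((isPath_comp_iff hε).1 hβε).2
  have hroot : (S.act g ε).1 = Γ.src α := by rw [S.ran_act g ε hεp, hε, hαβ]
  refine ⟨(isPath_comp_iff hroot).2 ⟨hα, S.isPath_act g ε hεp⟩, hδ, ?_⟩
  change Γ.src (comp α (S.act g ε)) = GA.actV (S.coc g ε * h) (Γ.src δ)
  rw [src_comp hroot.symm, S.src_act g ε hεp, GA.actV_mul, S.coc_vertex_act g ε _ hεp, ← hβεδ,
    src_comp hε.symm]

theorem sgeMul_mem_sgeSet {x y : Option (Pth V E × G × Pth V E)} (hx : x ∈ sgeSet Γ GA)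
    (hy : y ∈ sgeSet Γ GA) : sgeMul S x y ∈ sgeSet Γ GA := by
  rcases hx with rfl | ⟨⟨α, g, β⟩, rfl, hx⟩
  · exact Or.inl (sgeMul_none_left S y)
  rcases hy with rfl | ⟨⟨γ, h, δ⟩, rfl, hy⟩
  · exact Or.inl (sgeMul_none_right S _)
  by_cases hβγ : IsPrefix β γ
  · obtain ⟨ε, hε, rfl⟩ := hβγ.exists_eq_comp Γ
    exact Or.inr ⟨_, sgeMulAux_comp_right S hε, sgeCond_comp_right S hx hy hε⟩
  by_cases hγβ : IsPrefix γ β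
  · obtain ⟨ε, hε, rfl⟩ := hγβ.exists_eq_comp Γ
    rw [← sgeStar_sgeStar (sgeMul S _ _), sgeStar_sgeMul]
    refine sgeStar_mem_sgeSet (Or.inr ⟨_, sgeMulAux_comp_right S hε, ?_⟩)
    exact sgeCond_comp_right S (sgeCond_star hy) (sgeCond_star hx) hε
  exact Or.inl ((sgeMulAux_eq_none_iff S).2 ⟨hβγ, hγβ⟩)

theorem sgeMul_assoc_of_star {x y z : Option (Pth V E × G × Pth V E)}
    (h : sgeMul S (sgeMul S (sgeStar z) (sgeStar y)) (sgeStar x) =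
      sgeMul S (sgeStar z) (sgeMul S (sgeStar y) (sgeStar x))) :
    sgeMul S (sgeMul S x y) z = sgeMul S x (sgeMul S y z) := by
  apply (Function.Involutive.injective (f := sgeStar) sgeStar_sgeStar)
  simp only [sgeStar_sgeMul]
  exact h.symm

theorem sgeMul_assoc_of_sgeMulAux_eq_none {x y : Pth V E × G × Pth V E}
    (hxy : sgeMulAux S x y = none) (z : Pth V E × G × Pth V E) :
    sgeMul S (sgeMul S (some x) (some y)) (some z) =
      sgeMul S (some x) (sgeMul S (some y) (some z)) := by
  rw [sgeMul_some S x y, hxy, sgeMul_none_left, sgeMul_some S y z]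
  cases hyz : sgeMulAux S y z with
  | none => rfl
  | some w =>
    exact (sgeMulAux_eq_none_of_isPrefix S hxy (isPrefix_fst_of_sgeMulAux_eq_some S hyz)).symm

variable {ζ θ : Pth V E} {k : G}

theorem sgeMul_assoc_of_isPrefix_of_isPrefix (hγ : Γ.IsPath γ) (hζ : Γ.IsPath ζ)
    (hγδ : Γ.src γ = GA.actV h (Γ.src δ)) (hβγ : IsPrefix β γ) (hδζ : IsPrefix δ ζ) :
    sgeMul S (sgeMul S (some (α, g, β)) (some (γ, h, δ))) (some (ζ, k, θ)) =
      sgeMul S (some (α, g, β)) (sgeMul S (some (γ, h, δ)) (some (ζ, k, θ))) := by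
  obtain ⟨ε, hε, rfl⟩ := hβγ.exists_eq_comp Γ
  obtain ⟨ε', hε', rfl⟩ := hδζ.exists_eq_comp Γ
  have hεp := ((isPath_comp_iff hε).1 hγ).2
  have hε'p := ((isPath_comp_iff hε').1 hζ).2
  have hhε' := S.isPath_act h ε' hε'p
  have hjoin : Γ.src ε = (S.act h ε').1 := by
    rw [S.ran_act h ε' hε'p, hε', ← hγδ, src_comp hε.symm]
  have hroot : (comp ε (S.act h ε')).1 = Γ.src β := hε
  rw [sgeMul_some, sgeMulAux_comp_right S hε, sgeMul_some, sgeMulAux_comp_right S hε',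
    sgeMul_some, sgeMulAux_comp_right S hε', sgeMul_some, comp_assoc β,
    sgeMulAux_comp_right S hroot, S.act_comp g ε _ hεp hhε' hjoin,
    S.coc_comp g ε _ hεp hhε' hjoin, S.act_mul _ _ ε' hε'p, S.coc_mul _ _ ε' hε'p, comp_assoc,
    mul_assoc]

theorem sgeMul_assoc_of_isPrefix_of_isPrefix_flip (hβγ : IsPrefix β γ) (hζδ : IsPrefix ζ δ) :
    sgeMul S (sgeMul S (some (α, g, β)) (some (γ, h, δ))) (some (ζ, k, θ)) =
      sgeMul S (some (α, g, β)) (sgeMul S (some (γ, h, δ)) (some (ζ, k, θ))) := by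
  obtain ⟨ε, hε, rfl⟩ := hβγ.exists_eq_comp Γ
  obtain ⟨ε', hε', rfl⟩ := hζδ.exists_eq_comp Γ
  simp only [sgeMul_some, sgeMulAux_comp_right S hε, sgeMulAux_comp_left S hε', mul_assoc]

theorem sgeMul_assoc_comp_act_comp_comp {η w : Pth V E} (hη : Γ.IsPath η) (hw : Γ.IsPath w)
    (hηδ : η.1 = Γ.src δ) (hwη : w.1 = Γ.src η) (hγδ : Γ.src γ = GA.actV h (Γ.src δ)) :
    sgeMul S (sgeMul S (some (α, g, comp γ (S.act h η))) (some (γ, h, δ)))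
        (some (comp δ (comp η w), k, θ)) =
      sgeMul S (some (α, g, comp γ (S.act h η)))
        (sgeMul S (some (γ, h, δ)) (some (comp δ (comp η w), k, θ))) := by
  have hhη : (S.act h η).1 = Γ.src γ := by rw [S.ran_act h η hη, hηδ, hγδ]
  have hw' : w.1 = Γ.src (comp δ η) := by rw [src_comp hηδ.symm, hwη]
  have hcw : (S.act (S.coc h η) w).1 = Γ.src (comp γ (S.act h η)) := by
    rw [S.ran_act _ w hw, S.coc_vertex_act h η _ hη, src_comp hhη.symm, S.src_act h η hη, hwη]
  have hxy : sgeMul S (some (α, g, comp γ (S.act h η))) (some (γ, h, δ)) =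
      some (α, g * S.coc h η, comp δ η) := by
    rw [sgeMul_some, sgeMulAux_comp_left S hhη, S.act_inv_act h hη, S.coc_inv_act h hη, inv_inv]
  have hyz : sgeMul S (some (γ, h, δ)) (some (comp δ (comp η w), k, θ)) =
      some (comp (comp γ (S.act h η)) (S.act (S.coc h η) w), S.coc (S.coc h η) w * k, θ) := by
    rw [sgeMul_some, sgeMulAux_comp_right S (ε := comp η w) hηδ, S.act_comp h η w hη hw hwη.symm,
      S.coc_comp h η w hη hw hwη.symm, comp_assoc]
  rw [hxy, hyz, sgeMul_some, ← comp_assoc, sgeMulAux_comp_right S hw', sgeMul_some,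
    sgeMulAux_comp_right S hcw, S.act_mul _ _ w hw, S.coc_mul _ _ w hw, mul_assoc]

theorem sgeMul_assoc_of_not_isPrefix_act {ε' : Pth V E} (hεp : Γ.IsPath ε)
    (hε'p : Γ.IsPath ε') (hε : ε.1 = Γ.src γ) (hε' : ε'.1 = Γ.src δ)
    (hγδ : Γ.src γ = GA.actV h (Γ.src δ)) (hle : ¬IsPrefix (S.act h⁻¹ ε) ε')
    (hge : ¬IsPrefix ε' (S.act h⁻¹ ε)) :
    sgeMul S (sgeMul S (some (α, g, comp γ ε)) (some (γ, h, δ))) (some (comp δ ε', k, θ)) =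
      sgeMul S (some (α, g, comp γ ε)) (sgeMul S (some (γ, h, δ)) (some (comp δ ε', k, θ))) := by
  have hroot : (S.act h⁻¹ ε).1 = ε'.1 := by
    rw [S.ran_act _ _ hεp, hε, hε', hγδ, GA.actV_inv_actV]
  have hroot' : ε.1 = (S.act h ε').1 := by rw [S.ran_act _ _ hε'p, hε', hε, hγδ]
  have hact := S.act_isPrefix_act_iff (S.isPath_act h ε' hε'p) hεp h⁻¹
  have hact' := S.act_isPrefix_act_iff hεp (S.isPath_act h ε' hε'p) h⁻¹
  rw [S.act_inv_act h hε'p] at hact hact'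
  rw [sgeMul_some, sgeMulAux_comp_left S hε, sgeMul_some, (sgeMulAux_eq_none_iff S).2, sgeMul_some,
    sgeMulAux_comp_right S hε', sgeMul_some, (sgeMulAux_eq_none_iff S).2]
  · simp only [comp_isPrefix_comp_iff hroot', comp_isPrefix_comp_iff hroot'.symm, ← hact, ← hact']
    exact ⟨hle, hge⟩
  · simp only [comp_isPrefix_comp_iff hroot, comp_isPrefix_comp_iff hroot.symm]
    exact ⟨hle, hge⟩

theorem sgeMul_assoc_of_isPrefix_flip_of_isPrefix (hβ : Γ.IsPath β) (hζ : Γ.IsPath ζ)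
    (hγδ : Γ.src γ = GA.actV h (Γ.src δ)) (hγβ : IsPrefix γ β) (hδζ : IsPrefix δ ζ) :
    sgeMul S (sgeMul S (some (α, g, β)) (some (γ, h, δ))) (some (ζ, k, θ)) =
      sgeMul S (some (α, g, β)) (sgeMul S (some (γ, h, δ)) (some (ζ, k, θ))) := by
  obtain ⟨ε, hε, rfl⟩ := hγβ.exists_eq_comp Γ
  obtain ⟨ε', hε', rfl⟩ := hδζ.exists_eq_comp Γ
  have hεp := ((isPath_comp_iff hε).1 hβ).2
  have hε'p := ((isPath_comp_iff hε').1 hζ).2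
  have hδγ : Γ.src δ = GA.actV h⁻¹ (Γ.src γ) := by rw [hγδ, GA.actV_inv_actV]
  -- `xy` ends in `δ(h⁻¹·ε)` and `z` starts with `δε'`
  by_cases hle : IsPrefix (S.act h⁻¹ ε) ε'
  · obtain ⟨w, hw, rfl⟩ := hle.exists_eq_comp Γ
    have hwp := ((isPath_comp_iff hw).1 hε'p).2
    have := sgeMul_assoc_comp_act_comp_comp S (α := α) (g := g) (k := k) (θ := θ)
      (S.isPath_act _ _ hεp) hwp (by rw [S.ran_act _ _ hεp, hε, hδγ]) hw hγδ
    rwa [S.act_act_inv h hεp] at this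
  by_cases hge : IsPrefix ε' (S.act h⁻¹ ε)
  · have hge' : IsPrefix (S.act h ε') ε := by
      simpa [S.act_act_inv h hεp] using S.isPrefix_act (S.isPath_act _ _ hεp) hge h
    obtain ⟨w, hw, hεw⟩ := hge'.exists_eq_comp Γ
    have hwp := ((isPath_comp_iff hw).1 (hεw ▸ hεp)).2
    apply sgeMul_assoc_of_star
    have := sgeMul_assoc_comp_act_comp_comp S (h := h⁻¹) (α := θ) (g := k⁻¹) (k := g⁻¹) (θ := α)
      (S.isPath_act _ _ hε'p) hwp (by rw [S.ran_act _ _ hε'p, hε', hγδ]) hw hδγ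
    rwa [S.act_inv_act h hε'p, ← hεw] at this
  exact sgeMul_assoc_of_not_isPrefix_act S hεp hε'p hε hε' hγδ hle hge

theorem sgeMul_assoc {x y z : Option (Pth V E × G × Pth V E)} (hx : x ∈ sgeSet Γ GA)
    (hy : y ∈ sgeSet Γ GA) (hz : z ∈ sgeSet Γ GA) :
    sgeMul S (sgeMul S x y) z = sgeMul S x (sgeMul S y z) := by
  rcases hx with rfl | ⟨⟨α, g, β⟩, rfl, -, hβ, -⟩
  · simp
  rcases hy with rfl | ⟨⟨γ, h, δ⟩, rfl, hγ, hδ, hγδ⟩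
  · simp
  rcases hz with rfl | ⟨⟨ζ, k, θ⟩, rfl, hζ, -, -⟩
  · simp
  by_cases hxy : sgeMulAux S (α, g, β) (γ, h, δ) = none
  · exact sgeMul_assoc_of_sgeMulAux_eq_none S hxy _
  by_cases hyz : sgeMulAux S (γ, h, δ) (ζ, k, θ) = none
  · refine sgeMul_assoc_of_star S (sgeMul_assoc_of_sgeMulAux_eq_none S ?_ _)
    have := sgeStar_sgeMul S (some (γ, h, δ)) (some (ζ, k, θ))
    rw [sgeMul_some, hyz] at this
    exact this.symm
  have hδγ : Γ.src δ = GA.actV h⁻¹ (Γ.src γ) := by rw [hγδ, GA.actV_inv_actV]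
  rw [sgeMulAux_eq_none_iff, not_and_or, not_not, not_not] at hxy hyz
  rcases hxy with hβγ | hγβ <;> rcases hyz with hδζ | hζδ
  · exact sgeMul_assoc_of_isPrefix_of_isPrefix S hγ hζ hγδ hβγ hδζ
  · exact sgeMul_assoc_of_isPrefix_of_isPrefix_flip S hβγ hζδ
  · exact sgeMul_assoc_of_isPrefix_flip_of_isPrefix S hβ hζ hγδ hγβ hδζ
  · exact sgeMul_assoc_of_star S (sgeMul_assoc_of_isPrefix_of_isPrefix S hδ hβ hδγ hζδ hγβ)

theorem eq_and_eq_mul_of_sgeMulAux_eq {a b c : G} (hδ : Γ.IsPath δ) (hγ : Γ.IsPath γ)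
    (h : sgeMulAux S (α, a, δ) (γ, b, β) = some (α, c, β)) : δ = γ ∧ c = a * b := by
  by_cases hδγ : IsPrefix δ γ
  · obtain ⟨w, hw, rfl⟩ := hδγ.exists_eq_comp Γ
    simp only [sgeMulAux_comp_right S hw, Option.some.injEq, Prod.mk.injEq] at h
    obtain ⟨h₁, h₂, -⟩ := h
    have hw₀ := S.eq_ofVertex_of_comp_act_isPrefix ((isPath_comp_iff hw).1 hγ).2 (.of_eq h₁)
    rw [hw₀, S.coc_vertex] at h₂
    rw [hw₀, comp_ofVertex]
    exact ⟨rfl, h₂.symm⟩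
  by_cases hγδ : IsPrefix γ δ
  · obtain ⟨w, hw, rfl⟩ := hγδ.exists_eq_comp Γ
    simp only [sgeMulAux_comp_left S hw, Option.some.injEq, Prod.mk.injEq] at h
    obtain ⟨-, h₂, h₃⟩ := h
    have hw₀ := S.eq_ofVertex_of_comp_act_isPrefix ((isPath_comp_iff hw).1 hδ).2 (.of_eq h₃)
    rw [hw₀, S.coc_vertex, inv_inv] at h₂
    rw [hw₀, comp_ofVertex]
    exact ⟨rfl, h₂.symm⟩
  rw [(sgeMulAux_eq_none_iff S).2 ⟨hδγ, hγδ⟩] at h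
  cases h

theorem eq_of_sgeMul_sgeMul_eq_self_of_isPrefix (hα : Γ.IsPath α) (hγ : Γ.IsPath γ)
    (hδ : Γ.IsPath δ) (hβγ : IsPrefix β γ)
    (hxyx : sgeMul S (sgeMul S (some (α, g, β)) (some (γ, h, δ))) (some (α, g, β)) =
      some (α, g, β)) : (γ, h, δ) = (β, g⁻¹, α) := by
  obtain ⟨ε, hε, rfl⟩ := hβγ.exists_eq_comp Γ
  rw [sgeMul_some, sgeMulAux_comp_right S hε, sgeMul_some] at hxyx
  have hε₀ := S.eq_ofVertex_of_comp_act_isPrefix ((isPath_comp_iff hε).1 hγ).2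
    (isPrefix_fst_of_sgeMulAux_eq_some S hxyx)
  rw [hε₀, S.act_vertex, S.coc_vertex, comp_ofVertex] at hxyx
  obtain ⟨rfl, hg⟩ := eq_and_eq_mul_of_sgeMulAux_eq S hδ hα hxyx
  have hinv : h = g⁻¹ :=
    eq_inv_of_mul_eq_one_left (mul_eq_left.mp (by rw [← mul_assoc]; exact hg.symm))
  rw [hε₀, comp_ofVertex, hinv]

theorem eq_sgeStar_of_sgeMul_sgeMul_eq_self {x y : Option (Pth V E × G × Pth V E)}
    (hx : x ∈ sgeSet Γ GA) (hy : y ∈ sgeSet Γ GA) (hxyx : sgeMul S (sgeMul S x y) x = x)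
    (hyxy : sgeMul S (sgeMul S y x) y = y) : y = sgeStar x := by
  have hyxy' : sgeMul S (sgeMul S (sgeStar y) (sgeStar x)) (sgeStar y) = sgeStar y := by
    rw [← sgeStar_sgeMul, ← sgeStar_sgeMul, ← sgeMul_assoc S hy hx hy, hyxy]
  rcases hx with rfl | ⟨⟨α, g, β⟩, rfl, hα, hβ, -⟩
  · simpa [sgeStar] using hyxy.symm
  rcases hy with rfl | ⟨⟨γ, h, δ⟩, rfl, hγ, hδ, -⟩
  · simp at hxyx
  by_cases hβγ : IsPrefix β γ
  · rw [eq_of_sgeMul_sgeMul_eq_self_of_isPrefix S hα hγ hδ hβγ hxyx]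
    simp
  by_cases hγβ : IsPrefix γ β
  · have := eq_of_sgeMul_sgeMul_eq_self_of_isPrefix S hδ hβ hα hγβ hyxy'
    simp only [Prod.mk.injEq, inv_inj] at this
    obtain ⟨rfl, rfl, rfl⟩ := this
    simp
  rw [sgeMul_some, (sgeMulAux_eq_none_iff S).2 ⟨hβγ, hγβ⟩, sgeMul_none_left] at hxyx
  cases hxyx

end Semigroup

end SSGraph

open SSGraph in
theorem sge_inverse_semigroup_general {V E G : Type*} [Group G]
    (Γ : SSGraph V E)
    (GA : SSGraph.GraphAction G Γ) (c : SSGraph.EdgeCocycle GA)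
    (S : PathSystem c) :
    (∀ x ∈ sgeSet Γ GA, ∀ y ∈ sgeSet Γ GA, sgeMul S x y ∈ sgeSet Γ GA) ∧
    (∀ x ∈ sgeSet Γ GA, sgeStar x ∈ sgeSet Γ GA) ∧
    (∀ x ∈ sgeSet Γ GA, ∀ y ∈ sgeSet Γ GA, ∀ z ∈ sgeSet Γ GA,
      sgeMul S (sgeMul S x y) z = sgeMul S x (sgeMul S y z)) ∧
    (∀ x, sgeMul S none x = none ∧ sgeMul S x none = none) ∧
    (∀ x ∈ sgeSet Γ GA,
      sgeMul S (sgeMul S x (sgeStar x)) x = x ∧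
      sgeMul S (sgeMul S (sgeStar x) x) (sgeStar x) = sgeStar x ∧
      ∀ y ∈ sgeSet Γ GA,
        sgeMul S (sgeMul S x y) x = x → sgeMul S (sgeMul S y x) y = y →
        y = sgeStar x) :=
  ⟨fun _ hx _ hy => sgeMul_mem_sgeSet S hx hy, fun _ hx => sgeStar_mem_sgeSet hx,
    fun _ hx _ hy _ hz => sgeMul_assoc S hx hy hz,
    fun x => ⟨sgeMul_none_left S x, sgeMul_none_right S x⟩,
    fun x hx => ⟨sgeMul_sgeMul_sgeStar_self S x,
      by simpa using sgeMul_sgeMul_sgeStar_self S (sgeStar x),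
      fun _ hy hxyx hyxy => eq_sgeStar_of_sgeMul_sgeMul_eq_self S hx hy hxyx hyxy⟩⟩

open SSGraph in
theorem sge_inverse_semigroup {V E G : Type*} [Group G] [Countable G] [Fintype V] [Fintype E]
    (Γ : SSGraph V E) (hns : ∀ v : V, ∃ e, Γ.r e = v)
    (GA : SSGraph.GraphAction G Γ) (c : SSGraph.EdgeCocycle GA)
    (S : PathSystem c) :
    (∀ x ∈ sgeSet Γ GA, ∀ y ∈ sgeSet Γ GA, sgeMul S x y ∈ sgeSet Γ GA) ∧
    (∀ x ∈ sgeSet Γ GA, sgeStar x ∈ sgeSet Γ GA) ∧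
    (∀ x ∈ sgeSet Γ GA, ∀ y ∈ sgeSet Γ GA, ∀ z ∈ sgeSet Γ GA,
      sgeMul S (sgeMul S x y) z = sgeMul S x (sgeMul S y z)) ∧
    (∀ x, sgeMul S none x = none ∧ sgeMul S x none = none) ∧
    (∀ x ∈ sgeSet Γ GA,
      sgeMul S (sgeMul S x (sgeStar x)) x = x ∧
      sgeMul S (sgeMul S (sgeStar x) x) (sgeStar x) = sgeStar x ∧
      ∀ y ∈ sgeSet Γ GA,
        sgeMul S (sgeMul S x y) x = x → sgeMul S (sgeMul S y x) y = y →
        y = sgeStar x) :=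
  sge_inverse_semigroup_general Γ GA c S
end

section
/- In the idempotent semilattice of S_{G,E}, any two idempotents e, f with ef ≠ 0 are comparable: either e ≤ f or f ≤ e. -/
/-! A product of idempotents `e_α e_β` is nonzero only if one of `α`, `β` extends the other. If
`β = α ε`, the product is `(α (1 · ε), φ(1, ε), β) = e_β`, because `1 · ε = ε` and `φ(1, ε) = 1`;
symmetrically, `α = β ε` gives `e_α`. -/

namespace SSGraph

variable {V E G : Type*}

theorem isPath_of_append {Γ : SSGraph V E} {v : V} {l₁ l₂ : List E}
    (h : Γ.IsPath (v, l₁ ++ l₂)) : Γ.IsPath (Γ.src (v, l₁), l₂) := by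
  obtain ⟨hhead, hchain⟩ := h
  rw [List.Chain', List.isChain_append] at hchain
  refine ⟨fun e he => ?_, hchain.2.1⟩
  rcases hlast : l₁.getLast? with _ | a
  · rw [List.getLast?_eq_none_iff] at hlast
    subst hlast
    exact hhead e he
  · simp only [src, hlast]
    exact (hchain.2.2 a hlast e he).symm

theorem comp_drop_of_isPrefix {α β : Pth V E} (v : V) (h₁ : α.1 = β.1) (h₂ : α.2 <+: β.2) :
    comp α (v, β.2.drop α.2.length) = β :=
  Prod.ext h₁ (List.prefix_append_drop h₂).symm

theorem isPath_drop_of_isPrefix {Γ : SSGraph V E} {α β : Pth V E} (hβ : Γ.IsPath β)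
    (h₁ : α.1 = β.1) (h₂ : α.2 <+: β.2) : Γ.IsPath (Γ.src α, β.2.drop α.2.length) := by
  rw [← comp_drop_of_isPrefix α.1 h₁ h₂] at hβ
  exact isPath_of_append hβ

theorem PathSystem.coc_one_s8 [Group G] {Γ : SSGraph V E} {GA : GraphAction G Γ}
    {c : EdgeCocycle GA} (S : PathSystem c) {p : Pth V E} (hp : Γ.IsPath p) :
    S.coc 1 p = 1 := by
  have h := S.coc_mul 1 1 p hp
  rw [S.act_one p hp, one_mul] at h
  exact left_eq_mul.mp h

section Idempotents

variable [Group G] {Γ : SSGraph V E} {GA : GraphAction G Γ} {c : EdgeCocycle GA}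
  (S : PathSystem c) {α β : Pth V E}

theorem sgeMul_idempotent_eq_right (hβ : Γ.IsPath β) (h₁ : α.1 = β.1) (h₂ : α.2 <+: β.2) :
    sgeMul S (some (α, 1, α)) (some (β, 1, β)) = some (β, 1, β) := by
  have hε := isPath_drop_of_isPrefix hβ h₁ h₂
  simp [sgeMul, sgeMulAux, h₁, h₂, S.act_one _ hε, S.coc_one_s8 hε, comp_drop_of_isPrefix _ h₁ h₂]

theorem sgeMul_idempotent_eq_left (hα : Γ.IsPath α) (h₁ : β.1 = α.1) (h₂ : β.2 <+: α.2) :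
    sgeMul S (some (α, 1, α)) (some (β, 1, β)) = some (α, 1, α) := by
  by_cases h : α.1 = β.1 ∧ α.2 <+: β.2
  · obtain rfl : α = β :=
      Prod.ext h.1 (h.2.eq_of_length (h.2.length_le.antisymm h₂.length_le))
    exact sgeMul_idempotent_eq_right S hα rfl h₂
  have hε := isPath_drop_of_isPrefix hα h₁ h₂
  simp only [sgeMul, sgeMulAux, if_neg h, if_pos (And.intro h₁ h₂), S.act_one _ hε, S.coc_one_s8 hε,
    comp_drop_of_isPrefix _ h₁ h₂, inv_one, mul_one]

end Idempotents

end SSGraph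

open SSGraph in
theorem sge_idempotents_comparable_general {V E G : Type*} [Group G]
    (Γ : SSGraph V E)
    (GA : SSGraph.GraphAction G Γ) (c : SSGraph.EdgeCocycle GA)
    (S : PathSystem c) (α β : Pth V E) (hα : Γ.IsPath α) (hβ : Γ.IsPath β)
    (hne : sgeMul S (some (α, 1, α)) (some (β, 1, β)) ≠ none) :
    sgeMul S (some (α, 1, α)) (some (β, 1, β)) = some (α, 1, α) ∨
      sgeMul S (some (α, 1, α)) (some (β, 1, β)) = some (β, 1, β) := by
  by_cases hαβ : α.1 = β.1 ∧ α.2 <+: β.2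
  · exact Or.inr (sgeMul_idempotent_eq_right S hβ hαβ.1 hαβ.2)
  by_cases hβα : β.1 = α.1 ∧ β.2 <+: α.2
  · exact Or.inl (sgeMul_idempotent_eq_left S hα hβα.1 hβα.2)
  exact absurd (by simp [sgeMul, sgeMulAux, hαβ, hβα]) hne

open SSGraph in
theorem sge_idempotents_comparable {V E G : Type*} [Group G] [Countable G] [Fintype V] [Fintype E]
    (Γ : SSGraph V E) (hns : ∀ v : V, ∃ e, Γ.r e = v)
    (GA : SSGraph.GraphAction G Γ) (c : SSGraph.EdgeCocycle GA)
    (S : PathSystem c) (α β : Pth V E) (hα : Γ.IsPath α) (hβ : Γ.IsPath β)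
    (hne : sgeMul S (some (α, 1, α)) (some (β, 1, β)) ≠ none) :
    sgeMul S (some (α, 1, α)) (some (β, 1, β)) = some (α, 1, α) ∨
      sgeMul S (some (α, 1, α)) (some (β, 1, β)) = some (β, 1, β) :=
  sge_idempotents_comparable_general Γ GA c S α β hα hβ hne
end

section
/- Assume (G,E,φ) is pseudo-free. If two elements u₁, u₂ of the tight groupoid of S_{G,E} satisfy d(u₁) = d(u₂), r(u₁) = r(u₂), and ℓ(u₁) = ℓ(u₂) (where ℓ is the lag cocycle into Ǧ ⋊_{ρ̌} ℤ), then u₁ = u₂. -/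
noncomputable section

open scoped Classical

/-! Both germs are compared on the cylinder `Z(δ)` of a long enough truncation `δ = β₁ε₁ = β₂ε₂`
of the common source `β₁ξ₁ = β₂ξ₂`. There `(αᵢ, gᵢ, βᵢ)(δ, 1, δ) = (αᵢ(gᵢ·εᵢ), φ(gᵢ, εᵢ), δ)`:
the paths `αᵢ(gᵢ·εᵢ)` are truncations of the common range, of equal length because the lags
`|αᵢ| - |βᵢ|` agree, and the cocycle values are entries of the shifted sequences `Φ(gᵢ, ξᵢ)`,
which agree far out because their classes in the corona group do. -/

section Corona

variable {G : Type*} [Group G]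

lemma rshift_iterate_apply_add (f : ℕ → G) (L k : ℕ) : (⇑(rshift G))^[L] f (L + k) = f k := by
  induction L with
  | zero => simp
  | succ L ih =>
    rw [Function.iterate_succ_apply']
    show (if L + 1 + k = 0 then 1 else _) = f k
    rw [if_neg (by omega), ← ih, show L + 1 + k - 1 = L + k by omega]

lemma exists_eq_of_mk_rshift_iterate_eq {f₁ f₂ : ℕ → G} {a₁ a₂ : ℕ}
    (h : QuotientGroup.mk' (eventuallyTrivial G) ((⇑(rshift G))^[a₁] f₁) =
      QuotientGroup.mk' (eventuallyTrivial G) ((⇑(rshift G))^[a₂] f₂)) :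
    ∃ N, ∀ k₁ k₂, a₁ + k₁ = a₂ + k₂ → N ≤ a₁ + k₁ → f₁ k₁ = f₂ k₂ := by
  obtain ⟨N, hN⟩ := QuotientGroup.eq.mp h
  refine ⟨N, fun k₁ k₂ hk hNk => ?_⟩
  have hNk := hN _ hNk
  rw [Pi.mul_apply, Pi.inv_apply, inv_mul_eq_one] at hNk
  rwa [rshift_iterate_apply_add, hk, rshift_iterate_apply_add] at hNk

end Corona

namespace SSGraph

variable {V E G : Type*} {Γ : SSGraph V E}

lemma compInf_of_lt (β : Pth V E) (ξ : ℕ → E) {n : ℕ} (h : n < β.2.length) :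
    compInf β ξ n = β.2[n] :=
  List.getD_eq_getElem _ _ h

lemma compInf_of_le (β : Pth V E) (ξ : ℕ → E) {n : ℕ} (h : β.2.length ≤ n) :
    compInf β ξ n = ξ (n - β.2.length) :=
  List.getD_eq_default _ _ h

lemma map_range_compInf (β : Pth V E) (ξ : ℕ → E) (k : ℕ) :
    (List.range (β.2.length + k)).map (compInf β ξ) = β.2 ++ (List.range k).map ξ := by
  refine List.ext_getElem (by simp) fun n _ _ => ?_
  simp only [List.getElem_map, List.getElem_range, List.getElem_append]
  split
  · exact compInf_of_lt β ξ ‹_›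
  · exact compInf_of_le β ξ (by omega)

lemma IsPath.r_compInf_zero {β : Pth V E} {ξ : ℕ → E} (hβ : Γ.IsPath β)
    (hsrc : Γ.src β = Γ.r (ξ 0)) : Γ.r (compInf β ξ 0) = β.1 := by
  obtain ⟨v, _ | ⟨e, l⟩⟩ := β
  · exact hsrc.symm
  · exact hβ.1 e rfl

lemma IsPath.trunc_compInf_add {β : Pth V E} {ξ : ℕ → E} (hβ : Γ.IsPath β)
    (hsrc : Γ.src β = Γ.r (ξ 0)) (k : ℕ) :
    Γ.trunc (compInf β ξ) (β.2.length + k) = comp β (Γ.trunc ξ k) :=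
  Prod.ext (hβ.r_compInf_zero hsrc) (map_range_compInf β ξ k)

lemma isPath_comp {p q : Pth V E} (hp : Γ.IsPath p) (hq : Γ.IsPath q) (hpq : Γ.src p = q.1) :
    Γ.IsPath (comp p q) := by
  obtain ⟨v, _ | ⟨e, l⟩⟩ := p
  · exact ⟨fun e he => (hq.1 e he).trans hpq.symm, hq.2⟩
  refine ⟨hp.1, List.isChain_append.mpr ⟨hp.2, hq.2, fun x hx y hy => ?_⟩⟩
  have hsrc : Γ.src (v, e :: l) = Γ.d x := by
    simp only [src, Option.mem_def] at hx ⊢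
    rw [hx]
  exact hsrc.symm.trans (hpq.trans (hq.1 y hy).symm)

lemma InfPath.isPath_trunc {ξ : ℕ → E} (hξ : Γ.InfPath ξ) (n : ℕ) : Γ.IsPath (Γ.trunc ξ n) := by
  refine ⟨fun e he => ?_, (List.isChain_map ξ).mpr ?_⟩
  · cases n with
    | zero => simp [trunc] at he
    | succ n =>
      simp only [trunc, List.range_succ_eq_map, List.map_cons, List.head?_cons,
        Option.mem_def, Option.some.injEq] at he
      exact he ▸ rfl
  · cases n with
    | zero => simp
    | succ n => exact (List.isChain_range_succ _ n).mpr fun m _ => hξ m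

lemma inCyl_trunc (η : ℕ → E) (n : ℕ) : Γ.InCyl (Γ.trunc η n) η :=
  ⟨rfl, fun m hm => by simp [trunc]⟩

variable [Group G] {GA : GraphAction G Γ} {c : EdgeCocycle GA} {S : PathSystem c}

lemma sgeMul_comp_idempotent (α : Pth V E) (g : G) (β ε : Pth V E)
    (hε : ε.1 = Γ.src β) :
    sgeMul S (some (α, g, β)) (some (comp β ε, 1, comp β ε)) =
      some (comp α (S.act g ε), S.coc g ε, comp β ε) := by
  have hε' : ((Γ.src β, (β.2 ++ ε.2).drop β.2.length) : Pth V E) = ε := by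
    rw [List.drop_left, ← hε]
  show sgeMulAux S _ _ = _
  rw [sgeMulAux, if_pos ⟨rfl, List.prefix_append _ _⟩]
  simp only [comp, hε', mul_one]

lemma InfAction.r_apply_zero (IA : InfAction S) (g : G) {ξ : ℕ → E} (hξ : Γ.InfPath ξ) :
    Γ.r (IA.a g ξ 0) = GA.actV g (Γ.r (ξ 0)) :=
  (congrArg Prod.fst (IA.trunc_a g ξ 1 hξ)).trans (S.ran_act g _ (hξ.isPath_trunc 1))

lemma sgeMul_comp_trunc (IA : InfAction S) {α : Pth V E} {g : G} {β : Pth V E} {ξ : ℕ → E}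
    (hc : SgeCond Γ GA (α, g, β)) (hξ : Γ.InfPath ξ) (hsrc : Γ.src β = Γ.r (ξ 0)) (k : ℕ) :
    sgeMul S (some (α, g, β)) (some (comp β (Γ.trunc ξ k), 1, comp β (Γ.trunc ξ k))) =
      some (Γ.trunc (compInf α (IA.a g ξ)) (α.2.length + k), Phi S g ξ k,
        comp β (Γ.trunc ξ k)) := by
  have hα : Γ.src α = Γ.r (IA.a g ξ 0) := by rw [hc.2.2, IA.r_apply_zero g hξ, hsrc]
  rw [sgeMul_comp_idempotent α g β _ hsrc.symm, ← IA.trunc_a g ξ k hξ,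
    hc.1.trunc_compInf_add hα]
  rfl

end SSGraph

open SSGraph in
theorem lag_source_range_determine_germ_general {V E G : Type*} [Group G]
    (Γ : SSGraph V E) (GA : SSGraph.GraphAction G Γ) (c : SSGraph.EdgeCocycle GA)
    (S : PathSystem c) (IA : InfAction S) :
    ∀ (α₁ : Pth V E) (g₁ : G) (β₁ : Pth V E) (ξ₁ : ℕ → E)
      (α₂ : Pth V E) (g₂ : G) (β₂ : Pth V E) (ξ₂ : ℕ → E),
      SgeCond Γ GA (α₁, g₁, β₁) → SgeCond Γ GA (α₂, g₂, β₂) →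
      Γ.InfPath ξ₁ → Γ.InfPath ξ₂ →
      Γ.src β₁ = Γ.r (ξ₁ 0) → Γ.src β₂ = Γ.r (ξ₂ 0) →
      compInf β₁ ξ₁ = compInf β₂ ξ₂ →
      compInf α₁ (IA.a g₁ ξ₁) = compInf α₂ (IA.a g₂ ξ₂) →
      QuotientGroup.mk' (eventuallyTrivial G)
          ((⇑(rshift G))^[α₁.2.length] (Phi S g₁ ξ₁)) =
        QuotientGroup.mk' (eventuallyTrivial G)
          ((⇑(rshift G))^[α₂.2.length] (Phi S g₂ ξ₂)) →
      (α₁.2.length : ℤ) - β₁.2.length = (α₂.2.length : ℤ) - β₂.2.length →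
      germEqv S α₁ g₁ β₁ (compInf β₁ ξ₁) α₂ g₂ β₂ (compInf β₂ ξ₂) := by
  intro α₁ g₁ β₁ ξ₁ α₂ g₂ β₂ ξ₂ hc₁ hc₂ hξ₁ hξ₂ hs₁ hs₂ hsrc hran hcor hlag
  have hβ₁ : Γ.IsPath β₁ := hc₁.2.1
  have hβ₂ : Γ.IsPath β₂ := hc₂.2.1
  obtain ⟨N, hN⟩ := exists_eq_of_mk_rshift_iterate_eq hcor
  set k₁ := β₂.2.length + N
  set k₂ := β₁.2.length + N
  have hα : α₁.2.length + k₁ = α₂.2.length + k₂ := by omega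
  have hδ : comp β₁ (Γ.trunc ξ₁ k₁) = comp β₂ (Γ.trunc ξ₂ k₂) := by
    rw [← hβ₁.trunc_compInf_add hs₁, ← hβ₂.trunc_compInf_add hs₂, hsrc]
    congr 1
    omega
  refine ⟨hsrc, comp β₁ (Γ.trunc ξ₁ k₁), isPath_comp hβ₁ (hξ₁.isPath_trunc k₁) hs₁, ?_, ?_⟩
  · rw [← hβ₁.trunc_compInf_add hs₁]
    exact inCyl_trunc _ _
  · rw [sgeMul_comp_trunc IA hc₁ hξ₁ hs₁, hδ, sgeMul_comp_trunc IA hc₂ hξ₂ hs₂, hran, hα,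
      hN k₁ k₂ hα (by omega)]

open SSGraph in
theorem lag_source_range_determine_germ {V E G : Type*} [Group G] [Countable G] [Fintype V] [Fintype E]
    (Γ : SSGraph V E) (hns : ∀ v : V, ∃ e, Γ.r e = v)
    (GA : SSGraph.GraphAction G Γ) (c : SSGraph.EdgeCocycle GA)
    (S : PathSystem c) (hpf : PseudoFree GA c) (IA : InfAction S) :
    ∀ (α₁ : Pth V E) (g₁ : G) (β₁ : Pth V E) (ξ₁ : ℕ → E)
      (α₂ : Pth V E) (g₂ : G) (β₂ : Pth V E) (ξ₂ : ℕ → E),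
      SgeCond Γ GA (α₁, g₁, β₁) → SgeCond Γ GA (α₂, g₂, β₂) →
      Γ.InfPath ξ₁ → Γ.InfPath ξ₂ →
      Γ.src β₁ = Γ.r (ξ₁ 0) → Γ.src β₂ = Γ.r (ξ₂ 0) →
      compInf β₁ ξ₁ = compInf β₂ ξ₂ →
      compInf α₁ (IA.a g₁ ξ₁) = compInf α₂ (IA.a g₂ ξ₂) →
      QuotientGroup.mk' (eventuallyTrivial G)
          ((⇑(rshift G))^[α₁.2.length] (Phi S g₁ ξ₁)) =
        QuotientGroup.mk' (eventuallyTrivial G)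
          ((⇑(rshift G))^[α₂.2.length] (Phi S g₂ ξ₂)) →
      (α₁.2.length : ℤ) - β₁.2.length = (α₂.2.length : ℤ) - β₂.2.length →
      germEqv S α₁ g₁ β₁ (compInf β₁ ξ₁) α₂ g₂ β₂ (compInf β₂ ξ₂) :=
  lag_source_range_determine_germ_general Γ GA c S IA
end
end
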